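/- Let G be a 2-connected n-vertex multigraph that contains a vertex adjacent to all other vertices. Then either G is isomorphic to K_n^k for some k ≥ 1 (i.e., every two distinct vertices of G are joined by exactly k edges), or G is DP-degree-colorable. -/

import Mathlib

open scoped Classical

/-- A multigraph on vertex type `V`: a symmetric edge-multiplicity function with no loops. -/
structure Multigraph (V : Type) where
  e : V → V → ℕ
  symm : ∀ u v, e u v = e v u
  loopless : ∀ v, e v v = 0

namespace Multigraph

variable {V : Type}

/-- `u` and `v` are adjacent if they are distinct and joined by at least one edge. -/
def Adj (G : Multigraph V) (u v : V) : Prop := u ≠ v ∧ 1 ≤ G.e u v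

/-- The underlying simple graph of a multigraph. -/
def toSimpleGraph (G : Multigraph V) : SimpleGraph V where
  Adj := G.Adj
  symm := ⟨fun u v h => ⟨Ne.symm h.1, by rw [G.symm]; exact h.2⟩⟩
  loopless := ⟨fun v h => h.1 rfl⟩

/-- The degree of a vertex: the sum of edge multiplicities at it. -/
def deg [Fintype V] (G : Multigraph V) (v : V) : ℕ := ∑ u, G.e v u

/-- The induced sub-multigraph on a set of vertices. -/
def induce (G : Multigraph V) (B : Set V) : Multigraph B where
  e u v := G.e u v
  symm u v := G.symm u v
  loopless v := G.loopless v

/-- A cover `(L, H)` of a multigraph `G`: pairwise disjoint lists `L v` of colors and a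
graph `H` on the union of the lists (given by its adjacency relation `HAdj`), such that each
`L v` spans a clique, every edge of `H` joins colors of a single list or colors of lists of
adjacent vertices, and each color of `L u` has at most `e_G(u,v)` neighbors in `L v`. -/
structure Cover (G : Multigraph V) (C : Type) where
  L : V → Finset C
  HAdj : C → C → Prop
  Hsymm : ∀ x y, HAdj x y → HAdj y x
  Hirrefl : ∀ x, ¬ HAdj x x
  disjoint : ∀ u v, u ≠ v → Disjoint (L u) (L v)
  cliques : ∀ v, ∀ x ∈ L v, ∀ y ∈ L v, x ≠ y → HAdj x y
  edges_within : ∀ x y, HAdj x y → ∃ u v, x ∈ L u ∧ y ∈ L v ∧ (u = v ∨ G.Adj u v)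
  matching : ∀ u v, u ≠ v → ∀ x ∈ L u, ((L v).filter fun y => HAdj x y).card ≤ G.e u v

/-- An `(L,H)`-coloring: an independent set of `H` meeting every list in exactly one color. -/
def Cover.IsColoring {G : Multigraph V} {C : Type} (cov : Cover G C) (I : Finset C) : Prop :=
  (∀ x ∈ I, ∃ v, x ∈ cov.L v) ∧
  (∀ x ∈ I, ∀ y ∈ I, ¬ cov.HAdj x y) ∧
  (∀ v, (I ∩ cov.L v).card = 1)

/-- `G` is `(L,H)`-colorable if an `(L,H)`-coloring exists. -/
def Cover.Colorable {G : Multigraph V} {C : Type} (cov : Cover G C) : Prop :=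
  ∃ I, cov.IsColoring I

/-- `G` is DP-degree-colorable if it is `(L,H)`-colorable whenever `|L v| ≥ deg v` for all `v`. -/
def DPDegreeColorable [Fintype V] (G : Multigraph V) : Prop :=
  ∀ (C : Type) (cov : Cover G C), (∀ v, G.deg v ≤ (cov.L v).card) → cov.Colorable

/-- The DP-chromatic number: the least `k` such that `G` is `(L,H)`-colorable for every cover
with all lists of size at least `k`. -/
noncomputable def DPChromatic [Fintype V] (G : Multigraph V) : ℕ :=
  sInf {k | ∀ (C : Type) (cov : Cover G C), (∀ v, k ≤ (cov.L v).card) → cov.Colorable}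

/-- The sub-multigraph of `G` on vertex set `A` with multiplicities `e' ≤ e_G`. -/
def subMG (G : Multigraph V) (A : Finset V) (e' : V → V → ℕ)
    (hsymm : ∀ u v, e' u v = e' v u) (hle : ∀ u v, e' u v ≤ G.e u v) :
    Multigraph {x // x ∈ A} where
  e u v := e' u v
  symm u v := hsymm u v
  loopless v := Nat.le_zero.mp (le_of_le_of_eq (hle v v) (G.loopless v))

/-- `G` is DP-`k`-critical: `χ_DP(G) = k` and every proper sub-multigraph (obtained by deleting
vertices and/or decreasing edge multiplicities) has smaller DP-chromatic number. -/
def DPCritical [Fintype V] (G : Multigraph V) (k : ℕ) : Prop :=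
  DPChromatic G = k ∧
  ∀ (A : Finset V) (e' : V → V → ℕ) (hsymm : ∀ u v, e' u v = e' v u)
    (hle : ∀ u v, e' u v ≤ G.e u v),
    (∀ u v, e' u v ≠ 0 → u ∈ A ∧ v ∈ A) →
    ¬(A = Finset.univ ∧ e' = G.e) →
    DPChromatic (subMG G A e' hsymm hle) < k

/-- `G[B]` is connected and has no cut vertex. -/
def Nonseparable (G : Multigraph V) (B : Set V) : Prop :=
  B.Nonempty ∧ (G.induce B).toSimpleGraph.Connected ∧
    ∀ v ∈ B, (G.induce (B \ {v})).toSimpleGraph.Preconnected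

/-- A block of `G`: a maximal vertex set inducing a connected sub-multigraph with no cut vertex. -/
def IsBlock (G : Multigraph V) (B : Set V) : Prop :=
  Nonseparable G B ∧ ∀ B', B ⊆ B' → Nonseparable G B' → B' = B

/-- `G` is 2-connected: connected, at least two vertices, and deleting any one vertex leaves
it connected. -/
def TwoConnected [Fintype V] (G : Multigraph V) : Prop :=
  G.toSimpleGraph.Connected ∧ 2 ≤ Fintype.card V ∧
    ∀ v : V, (G.induce ({v}ᶜ : Set V)).toSimpleGraph.Connected

end Multigraph

/-- A simple graph is a cycle iff it is connected and every vertex has exactly two neighbors. -/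
def IsCycleGraph {α : Type} (S : SimpleGraph α) : Prop :=
  S.Connected ∧ ∀ v, {u | S.Adj v u}.ncard = 2

/-- The multigraph `K_n^k`: `n` vertices, every two distinct vertices joined by `k` edges. -/
def KMG (n k : ℕ) : Multigraph (Fin n) where
  e u v := if u = v then 0 else k
  symm u v := by by_cases h : u = v <;> simp [h, eq_comm]
  loopless v := by simp

/-- The multigraph `C_n^k`: the `n`-cycle with every edge of multiplicity `k`. -/
def CMG (n k : ℕ) : Multigraph (Fin n) where
  e u v := if u ≠ v ∧ ((u.val + 1) % n = v.val ∨ (v.val + 1) % n = u.val) then k else 0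
  symm u v := by
    apply if_congr _ rfl rfl
    constructor
    · rintro ⟨h1, h2⟩; exact ⟨h1.symm, h2.symm⟩
    · rintro ⟨h1, h2⟩; exact ⟨h1.symm, h2.symm⟩
  loopless v := by simp


/-!
Greedy colouring along an order in which every vertex but the last one, `z`, has a later
neighbour leaves at most `deg z` colours of `L z` blocked; the colouring goes through as soon
as the first few vertices can be coloured so that they block fewer colours of `L z` than their
multiplicity to `z`. Such a saving exists unless `G` is `K_n^k`:
* if some colour `x ∈ L u` has fewer than `e(u,v)` neighbours in `L v`, colour `u` by `x`
  first and end at `v`, ordering the rest by distance to `v` in the connected graph `G - u`;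
* otherwise the cover is full, and two non-adjacent colours with a common neighbour in some `L z`
  save one colour at `z`. If `G` has a non-adjacent pair `a, b`, they come from a path
  `a, w, b` through the dominating vertex `w`; if `G` is complete but `e(p,q) < e(p,r)`,
  a double count of the edges between the neighbourhoods of a colour of `L p` in `L q` and
  in `L r` produces them.
-/

lemma SimpleGraph.Connected.exists_adj_dist_lt {α : Type} {S : SimpleGraph α}
    (hconn : S.Connected) {a z : α} (hne : a ≠ z) :
    ∃ b, S.Adj a b ∧ S.dist b z < S.dist a z := by
  obtain ⟨p, hp⟩ := (hconn.preconnected a z).exists_walk_length_eq_dist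
  have hnil : ¬ p.Nil := by
    rw [SimpleGraph.Walk.not_nil_iff_lt_length]
    exact hp ▸ hconn.pos_dist_of_ne hne
  refine ⟨p.snd, p.adj_snd hnil, ?_⟩
  have h1 := SimpleGraph.Walk.length_tail_add_one hnil
  have h2 := SimpleGraph.dist_le p.tail
  omega

namespace Multigraph

variable {V C : Type} {G : Multigraph V}

lemma Adj.symm {u v : V} (h : G.Adj u v) : G.Adj v u :=
  ⟨h.1.symm, G.symm u v ▸ h.2⟩

lemma e_eq_zero_of_not_adj {u v : V} (huv : u ≠ v) (h : ¬ G.Adj u v) : G.e u v = 0 := by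
  by_contra h0
  exact h ⟨huv, Nat.one_le_iff_ne_zero.mpr h0⟩

lemma exists_const_of_forall_le (hcomp : ∀ u v : V, u ≠ v → G.Adj u v)
    (h : ∀ p q r : V, q ≠ p → r ≠ p → G.e p r ≤ G.e p q) :
    ∃ k ≥ 1, ∀ u v : V, u ≠ v → G.e u v = k := by
  by_cases hpair : ∃ a b : V, a ≠ b
  · obtain ⟨a, b, hab⟩ := hpair
    have hstar : ∀ p q r : V, q ≠ p → r ≠ p → G.e p q = G.e p r := fun p q r hq hr =>
      le_antisymm (h p r q hr hq) (h p q r hq hr)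
    refine ⟨G.e a b, (hcomp a b hab).2, fun u v huv => ?_⟩
    by_cases hua : u = a
    · subst hua
      exact hstar u v b huv.symm hab.symm
    · rw [hstar u v a huv.symm (Ne.symm hua), G.symm u a, hstar a u b hua hab.symm]
  · push Not at hpair
    exact ⟨1, le_rfl, fun u v huv => absurd (hpair u v) huv⟩

lemma exists_rank_of_connected_induce {u v : V}
    (hconn : (G.induce ({u}ᶜ : Set V)).toSimpleGraph.Connected) (hvu : v ≠ u) :
    ∃ r : V → ℕ, ∀ a, a ≠ u → a ≠ v → ∃ b, b ≠ u ∧ G.Adj a b ∧ r b < r a := by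
  let v' : ({u}ᶜ : Set V) := ⟨v, hvu⟩
  refine ⟨fun a => if ha : a ≠ u then (G.induce _).toSimpleGraph.dist ⟨a, ha⟩ v' else 0,
    fun a hau hav => ?_⟩
  obtain ⟨b, ⟨hab, hle⟩, hlt⟩ :=
    hconn.exists_adj_dist_lt (a := ⟨a, hau⟩) (z := v') fun h => hav (congrArg Subtype.val h)
  have hbu : (b : V) ≠ u := b.2
  refine ⟨b, hbu, ⟨fun h => hab (Subtype.ext h), hle⟩, ?_⟩
  simpa only [dif_pos hau, dif_pos hbu] using hlt

lemma sum_e_lt_deg [Fintype V] {S : Finset V} {u v : V} (h : G.Adj v u) (hu : u ∉ S) :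
    ∑ w ∈ S, G.e v w < G.deg v :=
  calc ∑ w ∈ S, G.e v w < ∑ w ∈ insert u S, G.e v w := by
        rw [Finset.sum_insert hu]
        have := h.2
        omega
    _ ≤ G.deg v := Finset.sum_le_sum_of_subset (Finset.subset_univ _)

namespace Cover

variable (cov : Cover G C)

noncomputable def nbrs (x : C) (v : V) : Finset C := (cov.L v).filter (cov.HAdj x)

def IsFull : Prop := ∀ u v, G.Adj u v → ∀ x ∈ cov.L u, (cov.nbrs x v).card = G.e u v

def IsPartialColoring (S : Finset V) (c : V → C) : Prop :=
  (∀ v ∈ S, c v ∈ cov.L v) ∧ ∀ u ∈ S, ∀ v ∈ S, ¬ cov.HAdj (c u) (c v)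

noncomputable def blocked (S : Finset V) (c : V → C) (z : V) : Finset C :=
  S.biUnion fun u => cov.nbrs (c u) z

variable {cov}

lemma mem_nbrs {x y : C} {v : V} : y ∈ cov.nbrs x v ↔ y ∈ cov.L v ∧ cov.HAdj x y :=
  Finset.mem_filter

lemma card_nbrs_le {u v : V} (huv : u ≠ v) {x : C} (hx : x ∈ cov.L u) :
    (cov.nbrs x v).card ≤ G.e u v :=
  cov.matching u v huv x hx

lemma not_hAdj_of_not_adj {u v : V} (huv : u ≠ v) (h : ¬ G.Adj u v) {x y : C}
    (hx : x ∈ cov.L u) (hy : y ∈ cov.L v) : ¬ cov.HAdj x y := fun hxy => by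
  have hle := card_nbrs_le (cov := cov) huv hx
  rw [e_eq_zero_of_not_adj huv h, Nat.le_zero, Finset.card_eq_zero] at hle
  exact Finset.notMem_empty y (hle ▸ mem_nbrs.mpr ⟨hy, hxy⟩)

lemma exists_deficient_of_not_isFull (h : ¬ cov.IsFull) :
    ∃ u v, G.Adj u v ∧ ∃ x ∈ cov.L u, (cov.nbrs x v).card < G.e u v := by
  simp only [IsFull, not_forall] at h
  obtain ⟨u, v, huv, x, hx, hne⟩ := h
  exact ⟨u, v, huv, x, hx, lt_of_le_of_ne (card_nbrs_le huv.1 hx) hne⟩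

lemma IsFull.exists_hAdj (hfull : cov.IsFull) {u v : V} (huv : G.Adj u v) {x : C}
    (hx : x ∈ cov.L u) : ∃ y ∈ cov.L v, cov.HAdj x y := by
  obtain ⟨y, hy⟩ : (cov.nbrs x v).Nonempty := by
    rw [← Finset.card_pos, hfull u v huv x hx]
    exact huv.2
  exact ⟨y, (mem_nbrs.mp hy).1, (mem_nbrs.mp hy).2⟩

lemma IsFull.exists_common_nbr (hfull : cov.IsFull) {p q r : V} (hpq : G.Adj p q)
    (hpr : G.Adj p r) (hqr : G.Adj q r) (hlt : G.e p q < G.e p r) {ca : C}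
    (hca : ca ∈ cov.L p) :
    ∃ x ∈ cov.L r, ∃ cb ∈ cov.L q, cov.HAdj ca x ∧ cov.HAdj cb x ∧ ¬ cov.HAdj ca cb := by
  by_contra! hcon
  -- Otherwise each of the `e(p,r)` neighbours of `ca` in `L r` has all its `e(q,r)` neighbours
  -- in `L q` among the `e(p,q)` neighbours of `ca`, each of which receives at most `e(q,r)`
  -- of these edges: `e(p,r) e(q,r) ≤ e(p,q) e(q,r)`.
  have hdouble := Finset.card_mul_le_card_mul (fun x y => cov.HAdj x y)
    (s := cov.nbrs ca r) (t := cov.nbrs ca q) (m := G.e r q) (n := G.e q r)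
    (fun x hx => by
      obtain ⟨hxr, hcax⟩ := mem_nbrs.mp hx
      rw [← hfull r q hqr.symm x hxr]
      refine Finset.card_le_card fun y hy => ?_
      obtain ⟨hyq, hxy⟩ := mem_nbrs.mp hy
      exact Finset.mem_filter.mpr
        ⟨mem_nbrs.mpr ⟨hyq, hcon x hxr y hyq hcax (cov.Hsymm _ _ hxy)⟩, hxy⟩)
    (fun y hy => by
      refine le_trans (Finset.card_le_card fun x hx => ?_)
        (card_nbrs_le hqr.1 (mem_nbrs.mp hy).1)
      obtain ⟨hx, hxy⟩ := Finset.mem_filter.mp hx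
      exact mem_nbrs.mpr ⟨(mem_nbrs.mp hx).1, cov.Hsymm _ _ hxy⟩)
  rw [hfull p r hpr ca hca, hfull p q hpq ca hca, G.symm r q] at hdouble
  have := Nat.le_of_mul_le_mul_right hdouble hqr.2
  omega

lemma blocked_union (S T : Finset V) (c : V → C) (z : V) :
    cov.blocked (S ∪ T) c z = cov.blocked S c z ∪ cov.blocked T c z :=
  Finset.union_biUnion

lemma blocked_congr {S : Finset V} {c c' : V → C} (h : ∀ u ∈ S, c' u = c u) (z : V) :
    cov.blocked S c' z = cov.blocked S c z :=
  Finset.biUnion_congr rfl fun u hu => by rw [h u hu]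

lemma card_blocked_le {S : Finset V} {c : V → C} (hc : ∀ u ∈ S, c u ∈ cov.L u) {z : V}
    (hz : z ∉ S) : (cov.blocked S c z).card ≤ ∑ u ∈ S, G.e z u :=
  Finset.card_biUnion_le.trans <| Finset.sum_le_sum fun u hu => by
    rw [G.symm z u]
    exact card_nbrs_le (ne_of_mem_of_not_mem hu hz) (hc u hu)

lemma IsPartialColoring.update {S : Finset V} {c : V → C} (hc : cov.IsPartialColoring S c)
    {v : V} (hv : v ∉ S) {y : C} (hy : y ∈ cov.L v) (hyb : y ∉ cov.blocked S c v) :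
    cov.IsPartialColoring (insert v S) (Function.update c v y) := by
  have hfree : ∀ u ∈ S, ¬ cov.HAdj (c u) y := fun u hu h =>
    hyb (Finset.mem_biUnion.mpr ⟨u, hu, mem_nbrs.mpr ⟨hy, h⟩⟩)
  have hupd : ∀ u ∈ S, Function.update c v y u = c u := fun u hu =>
    Function.update_of_ne (ne_of_mem_of_not_mem hu hv) y c
  refine ⟨fun u hu => ?_, fun u hu u' hu' => ?_⟩
  · rcases Finset.mem_insert.mp hu with rfl | hu
    · rwa [Function.update_self]
    · rw [hupd u hu]
      exact hc.1 u hu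
  · rcases Finset.mem_insert.mp hu with rfl | hu <;>
      rcases Finset.mem_insert.mp hu' with hu' | hu'
    · rw [hu', Function.update_self]
      exact cov.Hirrefl y
    · rw [Function.update_self, hupd u' hu']
      exact fun h => hfree u' hu' (cov.Hsymm _ _ h)
    · rw [hu', Function.update_self, hupd u hu]
      exact hfree u hu
    · rw [hupd u hu, hupd u' hu']
      exact hc.2 u hu u' hu'

lemma IsPartialColoring.exists_insert {S : Finset V} {c : V → C}
    (hc : cov.IsPartialColoring S c) {v : V} (hv : v ∉ S)
    (hroom : (cov.blocked S c v).card < (cov.L v).card) :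
    ∃ c', cov.IsPartialColoring (insert v S) c' ∧ ∀ u ∈ S, c' u = c u := by
  obtain ⟨y, hy, hyb⟩ := Finset.exists_mem_notMem_of_card_lt_card hroom
  exact ⟨_, hc.update hv hy hyb, fun u hu =>
    Function.update_of_ne (ne_of_mem_of_not_mem hu hv) y c⟩

section Colorable

variable [Fintype V]

lemma IsPartialColoring.colorable {c : V → C} (hc : cov.IsPartialColoring Finset.univ c) :
    cov.Colorable := by
  have hlist : ∀ v, Finset.univ.image c ∩ cov.L v = {c v} := fun v => by
    ext y
    simp only [Finset.mem_inter, Finset.mem_image, Finset.mem_univ, true_and,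
      Finset.mem_singleton]
    constructor
    · rintro ⟨⟨u, rfl⟩, hu⟩
      obtain rfl | huv := eq_or_ne u v
      · rfl
      · exact absurd hu
          (Finset.disjoint_left.mp (cov.disjoint u v huv) (hc.1 u (Finset.mem_univ u)))
    · rintro rfl
      exact ⟨⟨v, rfl⟩, hc.1 v (Finset.mem_univ v)⟩
  refine ⟨Finset.univ.image c, fun x hx => ?_, fun x hx y hy => ?_, fun v => by
    rw [hlist, Finset.card_singleton]⟩
  · obtain ⟨u, -, rfl⟩ := Finset.mem_image.mp hx
    exact ⟨u, hc.1 u (Finset.mem_univ u)⟩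
  · obtain ⟨u, -, rfl⟩ := Finset.mem_image.mp hx
    obtain ⟨v, -, rfl⟩ := Finset.mem_image.mp hy
    exact hc.2 u (Finset.mem_univ u) v (Finset.mem_univ v)

lemma nonempty_L (hsize : ∀ v, G.deg v ≤ (cov.L v).card) {u v : V} (huv : G.Adj u v) :
    (cov.L u).Nonempty := by
  rw [← Finset.card_pos]
  exact lt_of_lt_of_le (sum_e_lt_deg huv (Finset.notMem_empty v)) (hsize u)

lemma IsPartialColoring.exists_extension (hsize : ∀ v, G.deg v ≤ (cov.L v).card)
    (r : V → ℕ) (T : Finset V) :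
    ∀ {S : Finset V} {c : V → C}, cov.IsPartialColoring S c → Disjoint S T →
      (∀ v ∈ T, ∃ u ∉ S, G.Adj v u ∧ r u < r v) →
      ∃ c', cov.IsPartialColoring (S ∪ T) c' ∧ ∀ u ∈ S, c' u = c u := by
  induction T using Finset.induction_on_max_value r with
  | empty => exact fun hc _ _ => ⟨_, by simpa using hc, fun _ _ => rfl⟩
  | insert a T haT hmax ih =>
    -- `a` has the largest rank, so its neighbour of smaller rank is still uncoloured
    intro S c hc hST hr
    have haS : a ∉ S := Finset.disjoint_right.mp hST (Finset.mem_insert_self a T)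
    obtain ⟨u, huS, hau, -⟩ := hr a (Finset.mem_insert_self a T)
    obtain ⟨c₁, hc₁, hc₁c⟩ := hc.exists_insert haS <|
      (card_blocked_le hc.1 haS).trans_lt ((sum_e_lt_deg hau huS).trans_le (hsize a))
    obtain ⟨c₂, hc₂, hc₂c₁⟩ := ih hc₁
      (Finset.disjoint_insert_left.mpr ⟨haT, (Finset.disjoint_insert_right.mp hST).2⟩)
      (fun v hv => by
        obtain ⟨u, huS, hvu, hlt⟩ := hr v (Finset.mem_insert_of_mem hv)
        refine ⟨u, fun hu => ?_, hvu, hlt⟩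
        rcases Finset.mem_insert.mp hu with rfl | hu
        · exact absurd (hmax v hv) (not_le.mpr hlt)
        · exact huS hu)
    refine ⟨c₂, ?_, fun u hu => (hc₂c₁ u (Finset.mem_insert_of_mem hu)).trans (hc₁c u hu)⟩
    rwa [Finset.insert_union, ← Finset.union_insert] at hc₂

lemma colorable_of_saving (hsize : ∀ v, G.deg v ≤ (cov.L v).card) {S : Finset V} {c : V → C}
    (hc : cov.IsPartialColoring S c) {z : V} (hz : z ∉ S)
    (hsave : (cov.blocked S c z).card < ∑ u ∈ S, G.e z u) (r : V → ℕ)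
    (hr : ∀ v ∉ S, v ≠ z → ∃ u ∉ S, G.Adj v u ∧ r u < r v) :
    cov.Colorable := by
  set T := (Finset.univ \ S).erase z
  have hST : Disjoint S T := Finset.disjoint_left.mpr fun v hv hvT =>
    (Finset.mem_sdiff.mp (Finset.mem_of_mem_erase hvT)).2 hv
  have hzT : z ∉ T := Finset.notMem_erase z _
  obtain ⟨c', hc', hc'c⟩ := hc.exists_extension hsize r T hST fun v hv =>
    hr v (Finset.mem_sdiff.mp (Finset.mem_of_mem_erase hv)).2 (Finset.ne_of_mem_erase hv)
  have hroom : (cov.blocked (S ∪ T) c' z).card < (cov.L z).card :=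
    calc (cov.blocked (S ∪ T) c' z).card
        = (cov.blocked S c z ∪ cov.blocked T c' z).card := by
          rw [blocked_union, blocked_congr hc'c]
      _ ≤ (cov.blocked S c z).card + (cov.blocked T c' z).card := Finset.card_union_le _ _
      _ < ∑ u ∈ S, G.e z u + ∑ u ∈ T, G.e z u :=
          add_lt_add_of_lt_of_le hsave
            (card_blocked_le (fun u hu => hc'.1 u (Finset.mem_union_right S hu)) hzT)
      _ = ∑ u ∈ S ∪ T, G.e z u := (Finset.sum_union hST).symm
      _ ≤ G.deg z := Finset.sum_le_sum_of_subset (Finset.subset_univ _)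
      _ ≤ (cov.L z).card := hsize z
  obtain ⟨c'', hc'', -⟩ := hc'.exists_insert (Finset.notMem_union.mpr ⟨hz, hzT⟩) hroom
  have huniv : insert z (S ∪ T) = Finset.univ := by
    ext v
    simp only [Finset.mem_insert, Finset.mem_union, Finset.mem_univ, iff_true, T,
      Finset.mem_erase, Finset.mem_sdiff, true_and]
    tauto
  exact (huniv ▸ hc'').colorable

lemma colorable_of_deficient (hsize : ∀ v, G.deg v ≤ (cov.L v).card) {u v : V}
    (hconn : (G.induce ({u}ᶜ : Set V)).toSimpleGraph.Connected) (huv : G.Adj u v) {x : C}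
    (hx : x ∈ cov.L u) (hdef : (cov.nbrs x v).card < G.e u v) :
    cov.Colorable := by
  have hc : cov.IsPartialColoring {u} fun _ => x :=
    ⟨fun _ hw => Finset.mem_singleton.mp hw ▸ hx, fun _ _ _ _ => cov.Hirrefl x⟩
  obtain ⟨r, hr⟩ := exists_rank_of_connected_induce hconn huv.1.symm
  refine colorable_of_saving hsize hc (Finset.notMem_singleton.mpr huv.1.symm) ?_ r ?_
  · rwa [blocked, Finset.singleton_biUnion, Finset.sum_singleton, G.symm]
  · intro a ha hav
    obtain ⟨b, hbu, hab, hlt⟩ := hr a (Finset.notMem_singleton.mp ha) hav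
    exact ⟨b, Finset.notMem_singleton.mpr hbu, hab, hlt⟩

lemma colorable_of_pair (hsize : ∀ v, G.deg v ≤ (cov.L v).card) {a b z : V}
    (hz : ∀ v, v ≠ z → G.Adj v z) (hab : a ≠ b) (haz : a ≠ z) (hbz : b ≠ z) {ca cb x : C}
    (hca : ca ∈ cov.L a) (hcb : cb ∈ cov.L b) (hnab : ¬ cov.HAdj ca cb) (hx : x ∈ cov.L z)
    (hax : cov.HAdj ca x) (hbx : cov.HAdj cb x) :
    cov.Colorable := by
  set c : V → C := Function.update (fun _ => cb) a ca
  have hca' : c a = ca := by simp [c]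
  have hcb' : c b = cb := by simp [c, hab.symm]
  have hc : cov.IsPartialColoring {a, b} c := by
    refine ⟨fun v hv => ?_, fun u hu v hv => ?_⟩
    · simp only [Finset.mem_insert, Finset.mem_singleton] at hv
      rcases hv with rfl | rfl
      exacts [hca' ▸ hca, hcb' ▸ hcb]
    · simp only [Finset.mem_insert, Finset.mem_singleton] at hu hv
      rcases hu with rfl | rfl <;> rcases hv with rfl | rfl <;> simp only [hca', hcb']
      exacts [cov.Hirrefl ca, hnab, fun h => hnab (cov.Hsymm _ _ h), cov.Hirrefl cb]
  have hzab : z ∉ ({a, b} : Finset V) := by simp [haz.symm, hbz.symm]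
  refine colorable_of_saving hsize hc hzab ?_ (fun v => if v = z then 0 else 1) ?_
  · have hinter : x ∈ cov.nbrs ca z ∩ cov.nbrs cb z :=
      Finset.mem_inter.mpr ⟨mem_nbrs.mpr ⟨hx, hax⟩, mem_nbrs.mpr ⟨hx, hbx⟩⟩
    have hunion := Finset.card_union_add_card_inter (cov.nbrs ca z) (cov.nbrs cb z)
    have := Finset.card_pos.mpr ⟨x, hinter⟩
    have := card_nbrs_le (v := z) haz hca
    have := card_nbrs_le (v := z) hbz hcb
    rw [blocked, Finset.biUnion_insert, Finset.singleton_biUnion, hca', hcb',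
      Finset.sum_pair hab, G.symm z a, G.symm z b]
    omega
  · intro v hv hvz
    exact ⟨z, hzab, hz v hvz, by simp [hvz]⟩

lemma IsFull.colorable_of_complete_of_lt (hsize : ∀ v, G.deg v ≤ (cov.L v).card)
    (hfull : cov.IsFull) (hcomp : ∀ u v : V, u ≠ v → G.Adj u v) {p q r : V} (hqp : q ≠ p)
    (hrp : r ≠ p) (hlt : G.e p q < G.e p r) :
    cov.Colorable := by
  have hqr : q ≠ r := by
    rintro rfl
    exact lt_irrefl _ hlt
  obtain ⟨ca, hca⟩ := nonempty_L hsize (hcomp p q hqp.symm)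
  obtain ⟨x, hx, cb, hcb, hax, hbx, hab⟩ := hfull.exists_common_nbr (hcomp p q hqp.symm)
    (hcomp p r hrp.symm) (hcomp q r hqr) hlt hca
  exact colorable_of_pair hsize (fun v hv => hcomp v r hv) hqp.symm hrp.symm hqr hca hcb hab
    hx hax hbx

lemma IsFull.colorable_of_not_adj (hsize : ∀ v, G.deg v ≤ (cov.L v).card)
    (hfull : cov.IsFull) {w : V} (hw : ∀ v : V, v ≠ w → G.Adj w v) {a b : V} (hab : a ≠ b)
    (hnadj : ¬ G.Adj a b) :
    cov.Colorable := by
  have haw : a ≠ w := by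
    rintro rfl
    exact hnadj (hw b hab.symm)
  have hbw : b ≠ w := by
    rintro rfl
    exact hnadj (hw a hab).symm
  obtain ⟨ca, hca⟩ := nonempty_L hsize (hw a haw).symm
  obtain ⟨x, hx, hax⟩ := hfull.exists_hAdj (hw a haw).symm hca
  obtain ⟨cb, hcb, hxb⟩ := hfull.exists_hAdj (hw b hbw) hx
  exact colorable_of_pair hsize (fun v hv => (hw v hv).symm) hab haw hbw hca hcb
    (not_hAdj_of_not_adj hab hnadj hca hcb) hx hax (cov.Hsymm _ _ hxb)

end Colorable

end Cover

end Multigraph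

open Multigraph in
/-- **Lemma (dominating vertex).** Let `G` be a 2-connected `n`-vertex multigraph containing a
vertex adjacent to all other vertices. Then either `G ≅ K_n^k` for some `k ≥ 1`, or `G` is
DP-degree-colorable. -/
theorem statement8 {V : Type} [Fintype V] (G : Multigraph V) (h2c : TwoConnected G)
    (w : V) (hw : ∀ v : V, v ≠ w → G.Adj w v) :
    (∃ k ≥ 1, ∀ u v : V, u ≠ v → G.e u v = k) ∨ DPDegreeColorable G := by
  by_cases hK : ∃ k ≥ 1, ∀ u v : V, u ≠ v → G.e u v = k
  · exact Or.inl hK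
  refine Or.inr fun C cov hsize => ?_
  by_cases hfull : cov.IsFull
  swap
  · obtain ⟨u, v, huv, x, hx, hdef⟩ := Cover.exists_deficient_of_not_isFull hfull
    exact Cover.colorable_of_deficient hsize (h2c.2.2 u) huv hx hdef
  by_cases hcomp : ∀ u v : V, u ≠ v → G.Adj u v
  · obtain ⟨p, q, r, hqp, hrp, hlt⟩ : ∃ p q r : V, q ≠ p ∧ r ≠ p ∧ G.e p q < G.e p r := by
      by_contra! h
      exact hK (exists_const_of_forall_le hcomp h)
    exact hfull.colorable_of_complete_of_lt hsize hcomp hqp hrp hlt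
  · push Not at hcomp
    obtain ⟨a, b, hab, hnadj⟩ := hcomp
    exact hfull.colorable_of_not_adj hsize hw hab hnadj
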